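/- The rational function T(x₁,x₂) = (x₂⁴ + x₁x₂³ + x₂³ + x₁²x₂ + 2x₁x₂ + x₁² + x₂ + 2x₁ + 1)/(x₁x₂²) satisfies T((x₂³+1)/x₁, x₂) = T(x₁,x₂) and T(x₁, (x₁+1)/x₂) = T(x₁,x₂), as identities of rational functions. -/
import Mathlib


open MvPolynomial

/-- The field of rational functions `ℚ(x₁, x₂)`. -/
noncomputable abbrev QF := FractionRing (MvPolynomial (Fin 2) ℚ)

noncomputable def x₁ : QF := algebraMap (MvPolynomial (Fin 2) ℚ) QF (X 0)
noncomputable def x₂ : QF := algebraMap (MvPolynomial (Fin 2) ℚ) QF (X 1)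

/-- A mutation invariant of type `G₂`. -/
noncomputable def T (a b : QF) : QF :=
  (b ^ 4 + a * b ^ 3 + b ^ 3 + a ^ 2 * b + 2 * a * b + a ^ 2 + b + 2 * a + 1) /
    (a * b ^ 2)

lemma amap_ne {p : MvPolynomial (Fin 2) ℚ} (h : p ≠ 0) :
    algebraMap (MvPolynomial (Fin 2) ℚ) QF p ≠ 0 := by
  simpa using (map_ne_zero_iff _
    (IsFractionRing.injective (MvPolynomial (Fin 2) ℚ) QF)).mpr h

lemma hx1 : x₁ ≠ 0 := amap_ne (X_ne_zero 0)
lemma hx2 : x₂ ≠ 0 := amap_ne (X_ne_zero 1)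

lemma hx23 : x₂ ^ 3 + 1 ≠ 0 := by
  have : (X 1 : MvPolynomial (Fin 2) ℚ) ^ 3 + 1 ≠ 0 := by
    intro h
    have := congrArg (MvPolynomial.coeff 0) h
    simp [MvPolynomial.coeff_X_pow] at this
  simpa [x₂, map_pow] using amap_ne this

lemma hx11 : x₁ + 1 ≠ 0 := by
  have : (X 0 : MvPolynomial (Fin 2) ℚ) + 1 ≠ 0 := by
    intro h
    have := congrArg (MvPolynomial.coeff 0) h
    simp at this
  simpa [x₁] using amap_ne this

/-- `T` is invariant under the type `G₂` mutations
`μ₁(x₁,x₂) = ((x₂³+1)/x₁, x₂)` and `μ₂(x₁,x₂) = (x₁, (x₁+1)/x₂)`. -/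
theorem stmt_6 :
    T ((x₂ ^ 3 + 1) / x₁) x₂ = T x₁ x₂ ∧ T x₁ ((x₁ + 1) / x₂) = T x₁ x₂ := by
  have h1 := hx1; have h2 := hx2; have h3 := hx23; have h4 := hx11
  constructor
  · set u := (x₂ ^ 3 + 1) / x₁ with hu_def
    have hu : u * x₁ = x₂ ^ 3 + 1 := div_mul_cancel₀ _ h1
    have hune : u ≠ 0 := div_ne_zero h3 h1
    unfold T
    rw [div_eq_div_iff (mul_ne_zero hune (pow_ne_zero 2 h2))
      (mul_ne_zero h1 (pow_ne_zero 2 h2))]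
    linear_combination (x₂ ^ 2 * (x₂ + 1) * (u - x₁)) * hu
  · set v := (x₁ + 1) / x₂ with hv_def
    have hv : v * x₂ = x₁ + 1 := div_mul_cancel₀ _ h2
    have hvne : v ≠ 0 := div_ne_zero h4 h2
    unfold T
    rw [div_eq_div_iff (mul_ne_zero h1 (pow_ne_zero 2 hvne))
      (mul_ne_zero h1 (pow_ne_zero 2 h2))]
    linear_combination (x₁ * (x₂ * v ^ 3 + (x₁ + 1) * (x₂ + 1) * v ^ 2
      - x₂ ^ 2 * (x₂ + x₁ + 1) * v - x₂ ^ 2 * (x₁ + 1))) * hv
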